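/- Let E = ℝ × ℝⁿ × ℝⁿ × ℝ^{k+r} with coordinates (t, q^i, v^i, s^α, u^a), κ^i = dq^i − v^i dt, I₁^{vak} = ⟨κ^i⟩, I₁^{nh} = ⟨η¹,…,η^k⟩ compatible constraints (τ ∧ η¹ ∧ … ∧ η^k ∧ κ¹ ∧ dκ¹ ∧ … ∧ κⁿ ∧ dκⁿ nowhere zero and i_{∂/∂v^i}η^α = 0 for all i, α), and let L : E → ℝ be smooth, Θ_L = L dt + (∂L/∂v^i)κ^i. Choose R_α with i_{R_α}τ = 0, i_{R_α}η^β = δ_α^β, set σ_α = i_{R_α}dΘ_L and Ω̄ = dΘ_L + σ_α ∧ η^α. Let E' = E × ℝ^{n+k} with coordinates (p_i, p_α), π' : E' → E, and Ω_U = dL' ∧ dt + d(p_i κ'^i) + dp_α ∧ η'^α, where primes denote pullback by π'. Then the GVP (Ω_U, ∅, Γ(V(π∘π'))) is an extension of the GVP (Ω̄, (∅, I₁^{nh}, I₁^{vak}), Γ(V(π))): the map γ' ↦ π'∘γ' sends Sol(Ω_U, ∅, Γ(V(π∘π'))) onto Sol(Ω̄, (∅, I₁^{nh}, I₁^{vak}),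 Γ(V(π))). -/

import Mathlib

open MeasureTheory Set Finset
open scoped ContDiff

noncomputable section

namespace VPGeom

variable {E : Type*} [NormedAddCommGroup E] [NormedSpace ℝ E]

/-- A smooth `k`-form in the function model: jointly smooth and, at each point,
given by an alternating multilinear map on the tangent space. -/
def IsFormK (k : ℕ) (α : E → (Fin k → E) → ℝ) : Prop :=
  ContDiff ℝ ∞ (fun p : E × (Fin k → E) => α p.1 p.2) ∧
    ∀ x : E, ∃ m : AlternatingMap ℝ E ℝ (Fin k), ∀ v, α x v = m v

/-- A smooth `1`-form in the function model. -/
def IsForm1 (θ : E → E → ℝ) : Prop :=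
  ContDiff ℝ ∞ (fun p : E × E => θ p.1 p.2) ∧ ∀ x : E, IsLinearMap ℝ (θ x)

/-- A smooth `2`-form in the function model. -/
def IsForm2 (Ω : E → E → E → ℝ) : Prop :=
  ContDiff ℝ ∞ (fun p : E × E × E => Ω p.1 p.2.1 p.2.2) ∧
    ∀ x : E, ∃ m : AlternatingMap ℝ E ℝ (Fin 2), ∀ u v : E, Ω x u v = m ![u, v]

/-- Exterior derivative of a `1`-form on a vector space
(formula with constant extensions of the tangent vectors). -/
def extd1 (θ : E → E → ℝ) : E → E → E → ℝ := fun x u v =>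
  fderiv ℝ (fun y => θ y v) x u - fderiv ℝ (fun y => θ y u) x v

/-- Exterior derivative of a `2`-form on a vector space. -/
def extd2 (Ω : E → E → E → ℝ) : E → E → E → E → ℝ := fun x u v w =>
  fderiv ℝ (fun y => Ω y v w) x u - fderiv ℝ (fun y => Ω y u w) x v +
    fderiv ℝ (fun y => Ω y u v) x w

/-- Lie derivative of a `1`-form along a vector field (on a vector space). -/
def lie1 (ξ : E → E) (θ : E → E → ℝ) : E → E → ℝ := fun x v =>
  fderiv ℝ (fun y => θ y v) x (ξ x) + θ x (fderiv ℝ ξ x v)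

/-- Wedge product of two `1`-forms. -/
def wedge11 (α β : E → E → ℝ) : E → E → E → ℝ := fun x u v =>
  α x u * β x v - α x v * β x u

/-- Wedge product of a `2`-form with a `1`-form. -/
def wedge21 (β : E → E → E → ℝ) (α : E → E → ℝ) : E → E → E → E → ℝ := fun x u v w =>
  β x u v * α x w - β x u w * α x v + β x v w * α x u

/-- Wedge product of a `1`-form with a `2`-form. -/
def wedge12 (α : E → E → ℝ) (β : E → E → E → ℝ) : E → E → E → E → ℝ := fun x u v w =>
  α x u * β x v w - α x v * β x u w + α x w * β x u v

/-- Interior product of a vector field with a `2`-form. -/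
def iota2 (ξ : E → E) (Ω : E → E → E → ℝ) : E → E → ℝ := fun x v => Ω x (ξ x) v

/-- `γ` is a smooth local section, over the open interval `I`, of the bundle over `ℝ`
whose projection ("time coordinate") is `T`. -/
structure IsSection (T : E → ℝ) (γ : ℝ → E) (I : Set ℝ) : Prop where
  isOpen : IsOpen I
  ordConnected : I.OrdConnected
  nonempty : I.Nonempty
  smooth : ContDiffOn ℝ ∞ γ I
  proj : ∀ t ∈ I, T (γ t) = t

/-- Membership in the `C^∞(E)`-ideal generated by a set of functions. -/
def InIdeal (I₀ : Set (E → ℝ)) (h : E → ℝ) : Prop :=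
  ∃ (m : ℕ) (f : Fin m → E → ℝ) (g : Fin m → E → ℝ),
    (∀ j, ContDiff ℝ ∞ (f j)) ∧ (∀ j, g j ∈ I₀) ∧ h = fun x => ∑ j, f j x * g j x

end VPGeom
namespace VPGeom

/-- `E = J¹ρ × N ≅ ℝ × ℝⁿ × ℝⁿ × ℝᵏ × ℝʳ` with coordinates `(t, qⁱ, vⁱ, sᵅ, uᵃ)`. -/
abbrev E12 (n k r : ℕ) := ℝ × (Fin n → ℝ) × (Fin n → ℝ) × (Fin k → ℝ) × (Fin r → ℝ)

/-- The Cartan 1-forms `κⁱ = dqⁱ - vⁱ dt` pulled back to `E`. -/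
def kap12 (n k r : ℕ) (i : Fin n) : E12 n k r → E12 n k r → ℝ := fun x w =>
  w.2.1 i - x.2.2.1 i * w.1

/-- `∂L/∂vⁱ`. -/
def dLv12 (n k r : ℕ) (L : E12 n k r → ℝ) (i : Fin n) : E12 n k r → ℝ := fun x =>
  fderiv ℝ L x ((0 : ℝ), (0 : Fin n → ℝ), Pi.single i 1, (0 : Fin k → ℝ), (0 : Fin r → ℝ))

/-- The Poincaré–Cartan 1-form `Θ_L = L dt + (∂L/∂vⁱ) κⁱ`. -/
def ThetaL12 (n k r : ℕ) (L : E12 n k r → ℝ) : E12 n k r → E12 n k r → ℝ := fun x w =>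
  L x * w.1 + ∑ i, dLv12 n k r L i x * kap12 n k r i x w

/-- The constraints `I₁ⁿʰ = ⟨η¹,…,ηᵏ⟩` and `I₁ᵛᵃᵏ = ⟨κ¹,…,κⁿ⟩` are compatible:
the `ηᵅ` number `k`; the wedge `τ ∧ (⋀ηᵅ) ∧ (⋀ κⁱ ∧ dκⁱ)` vanishes nowhere (expressed as the
pointwise linear independence of the covectors `τ, ηᵅ, κⁱ, dvⁱ`, which is the value of that
wedge condition since `dκⁱ = dt ∧ dvⁱ`); and `C ⊆ ⋂ ker ηᵅ`, i.e. `i_{∂/∂vⁱ} ηᵅ = 0`. -/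
def CompatibleConstraints (n k r : ℕ) (η : Fin k → E12 n k r → E12 n k r → ℝ) : Prop :=
  (∀ x : E12 n k r, LinearIndependent ℝ
    (Fin.cons (fun w : E12 n k r => w.1)
      (Fin.append (fun a : Fin k => η a x)
        (Fin.append (fun i : Fin n => kap12 n k r i x)
          (fun i : Fin n => fun w : E12 n k r => w.2.2.1 i))) :
      Fin (k + (n + n) + 1) → E12 n k r → ℝ)) ∧
  (∀ (i : Fin n) (a : Fin k) (x : E12 n k r),
    η a x ((0 : ℝ), (0 : Fin n → ℝ), Pi.single i 1, (0 : Fin k → ℝ), (0 : Fin r → ℝ)) = 0)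

/-- Membership in the `C^∞(E)`-module `⟨I₁ᵛᵃᵏ, I₁ⁿʰ⟩` generated by the `κⁱ` and the `ηᵅ`. -/
def InKapEtaSpan (n k r : ℕ) (η : Fin k → E12 n k r → E12 n k r → ℝ)
    (α : E12 n k r → E12 n k r → ℝ) : Prop :=
  ∃ (f : Fin n → E12 n k r → ℝ) (g : Fin k → E12 n k r → ℝ),
    (∀ j, ContDiff ℝ ∞ (f j)) ∧ (∀ a, ContDiff ℝ ∞ (g a)) ∧
    ∀ x w, α x w = ∑ j, f j x * kap12 n k r j x w + ∑ a, g a x * η a x w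

/-- The admissible variations: vertical smooth vector fields `ξ` with `i_ξ ηᵅ ∈ (I₀)` and
`ℒ_ξ κⁱ ∈ ⟨I₁ᵛᵃᵏ, I₁ⁿʰ⟩`. -/
def Adm12 (n k r : ℕ) (I₀ : Set (E12 n k r → ℝ))
    (η : Fin k → E12 n k r → E12 n k r → ℝ) : Set (E12 n k r → E12 n k r) :=
  {ξ | ContDiff ℝ ∞ ξ ∧ (∀ x, (ξ x).1 = 0) ∧
    (∀ a : Fin k, InIdeal I₀ fun x => η a x (ξ x)) ∧
    ∀ i : Fin n, InKapEtaSpan n k r η (lie1 ξ (kap12 n k r i))}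

/-- `⟨A⟩^{B(π)}`: all finite `B(π)`-linear combinations of elements of `A`. -/
def BSpan12 (n k r : ℕ) (A : Set (E12 n k r → E12 n k r)) : Set (E12 n k r → E12 n k r) :=
  {ξ | ∃ (m : ℕ) (g : Fin m → ℝ → ℝ) (ζ : Fin m → E12 n k r → E12 n k r),
    (∀ j, ContDiff ℝ ∞ (g j)) ∧ (∀ j, ζ j ∈ A) ∧ ξ = fun x => ∑ j, g j x.1 • ζ j x}

/-- The π-vertical smooth vector fields `Γ(V(π))`. -/
def Vert12 (n k r : ℕ) : Set (E12 n k r → E12 n k r) :=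
  {ξ | ContDiff ℝ ∞ ξ ∧ ∀ x, (ξ x).1 = 0}

end VPGeom

namespace VPGeom

/-- `E' = E × ℝⁿ⁺ᵏ` with additional coordinates `(pᵢ, p_α)`. -/
abbrev E16 (n k r : ℕ) := E12 n k r × (Fin n → ℝ) × (Fin k → ℝ)

/-- The unified form `Ω_U = dL' ∧ dt + d(pᵢ κ'ⁱ) + dp_α ∧ η'ᵅ` on `E'`. -/
def OmegaU16 (n k r : ℕ) (L : E12 n k r → ℝ)
    (η : Fin k → E12 n k r → E12 n k r → ℝ) : E16 n k r → E16 n k r → E16 n k r → ℝ :=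
  fun x u v =>
    wedge11 (fun y w => fderiv ℝ (fun z : E16 n k r => L z.1) y w)
        (fun _ w => w.1.1) x u v +
      extd1 (fun y w => ∑ i, y.2.1 i * kap12 n k r i y.1 w.1) x u v +
      ∑ a, (u.2.2 a * η a x.1 v.1 - v.2.2 a * η a x.1 u.1)

/-- Solution sections of the GVP `(Ω_U, ∅, Γ(V(π∘π')))` on `E'`. -/
def IsSolU16 (n k r : ℕ) (L : E12 n k r → ℝ) (η : Fin k → E12 n k r → E12 n k r → ℝ)
    (γ' : ℝ → E16 n k r) (I : Set ℝ) : Prop :=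
  IsSection (fun x => x.1.1) γ' I ∧
  ∀ ξ : E16 n k r → E16 n k r, ContDiff ℝ ∞ ξ → (∀ x, (ξ x).1.1 = 0) →
    ∀ t ∈ I, OmegaU16 n k r L η (γ' t) (ξ (γ' t)) (deriv γ' t) = 0

/-- Solution sections of the GVP `(Ω̄, (∅, I₁ⁿʰ, I₁ᵛᵃᵏ), Γ(V(π)))` on `E`. -/
def IsSolE16 (n k r : ℕ) (OmgBar : E12 n k r → E12 n k r → E12 n k r → ℝ)
    (η : Fin k → E12 n k r → E12 n k r → ℝ) (γ : ℝ → E12 n k r) (I : Set ℝ) : Prop :=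
  IsSection Prod.fst γ I ∧
  (∀ a : Fin k, ∀ t ∈ I, η a (γ t) (deriv γ t) = 0) ∧
  (∀ i : Fin n, ∀ t ∈ I, kap12 n k r i (γ t) (deriv γ t) = 0) ∧
  ∀ ξ ∈ Vert12 n k r, ∀ t ∈ I, OmgBar (γ t) (ξ (γ t)) (deriv γ t) = 0

/-!
Along a section of `E'` the time component of the velocity is `1`. Contracting `Ω_U` with the
vertical vectors `∂/∂pᵢ`, `∂/∂p_α` and `∂/∂vⁱ` gives the constraints `κⁱ = 0`, `ηᵅ = 0` and the
Legendre relation `pᵢ = ∂L/∂vⁱ`; on the remaining vertical vectors `w` it then reads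
`dΘ_L(w, γ̇) = ṗ_α ηᵅ(w)`. On the other side, once `ηᵅ(γ̇) = 0` and `ηᵝ(R_α) = δ_αᵝ`, the
contraction `Ω̄(w, γ̇)` equals `dΘ_L(w, γ̇) - dΘ_L(R_α, γ̇) ηᵅ(w)`, which vanishes on vertical `w`
exactly when `dΘ_L(·, γ̇)` is such a combination of the `ηᵅ`, the multipliers being
`σ_α(γ̇)`. A solution on `E` therefore lifts by `pᵢ = ∂L/∂vⁱ` and `p_α` a primitive of `σ_α(γ̇)`.
-/

theorem contDiff_extd1 {E : Type*} [NormedAddCommGroup E] [NormedSpace ℝ E] {θ : E → E → ℝ}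
    (hθ : ContDiff ℝ ∞ fun p : E × E => θ p.1 p.2) :
    ContDiff ℝ ∞ fun p : E × E × E => extd1 θ p.1 p.2.1 p.2.2 := by
  have hdθ : ∀ {u v : E × E × E → E}, ContDiff ℝ ∞ u → ContDiff ℝ ∞ v →
      ContDiff ℝ ∞ fun p => fderiv ℝ (fun y => θ y (v p)) p.1 (u p) := fun hu hv =>
    ((hθ.comp (contDiff_snd.prodMk (hv.comp contDiff_fst))).fderiv contDiff_fst
      (by simp)).clm_apply hu
  exact (hdθ contDiff_snd.fst contDiff_snd.snd).sub (hdθ contDiff_snd.snd contDiff_snd.fst)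

section Wedge

variable {X : Type*} {k : ℕ} (Ω : X → X → X → ℝ) (η : Fin k → X → X → ℝ) (R : Fin k → X → X)

theorem add_sum_wedge11_iota2_apply {x v : X} (hv : ∀ a, η a x v = 0) (w : X) :
    Ω x w v + ∑ a, wedge11 (iota2 (R a) Ω) (η a) x w v
      = Ω x w v - ∑ a, Ω x (R a x) v * η a x w := by
  simp [wedge11, iota2, hv, sub_eq_add_neg]

theorem add_sum_wedge11_iota2_eq_zero {x v : X} (hv : ∀ a, η a x v = 0)
    (hRη : ∀ a b, η b x (R a x) = if a = b then 1 else 0) {V : Set X} (hRV : ∀ a, R a x ∈ V)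
    {c : Fin k → ℝ} (hΩ : ∀ w ∈ V, Ω x w v = ∑ a, c a * η a x w) {w : X} (hw : w ∈ V) :
    Ω x w v + ∑ a, wedge11 (iota2 (R a) Ω) (η a) x w v = 0 := by
  have hc : ∀ a, Ω x (R a x) v = c a := fun a => by simp [hΩ _ (hRV a), hRη]
  rw [add_sum_wedge11_iota2_apply Ω η R hv, hΩ w hw]
  simp [hc]

end Wedge

section Lagrangian

variable {n k r : ℕ} {L : E12 n k r → ℝ}

def vCoord (n k r : ℕ) (i : Fin n) : E12 n k r →L[ℝ] ℝ :=
  (ContinuousLinearMap.proj i).comp ((ContinuousLinearMap.fst ℝ _ _).comp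
    ((ContinuousLinearMap.snd ℝ _ _).comp (ContinuousLinearMap.snd ℝ _ _)))

@[simp]
theorem vCoord_apply (i : Fin n) (w : E12 n k r) : vCoord n k r i w = w.2.2.1 i := rfl

def vBasis (n k r : ℕ) (i : Fin n) : E12 n k r :=
  ((0 : ℝ), (0 : Fin n → ℝ), Pi.single i 1, (0 : Fin k → ℝ), (0 : Fin r → ℝ))

theorem hasFDerivAt_kap12 (i : Fin n) (w x : E12 n k r) :
    HasFDerivAt (fun y => kap12 n k r i y w) (-(w.1 • vCoord n k r i)) x := by
  simpa [kap12] using (((vCoord n k r i).hasFDerivAt (x := x)).mul_const w.1).const_sub (w.2.1 i)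

theorem contDiff_dLv12 (hL : ContDiff ℝ ∞ L) (i : Fin n) : ContDiff ℝ ∞ (dLv12 n k r L i) :=
  (hL.fderiv_right (by simp)).clm_apply contDiff_const

theorem contDiff_ThetaL12 (hL : ContDiff ℝ ∞ L) :
    ContDiff ℝ ∞ fun p : E12 n k r × E12 n k r => ThetaL12 n k r L p.1 p.2 := by
  have := contDiff_dLv12 hL
  unfold ThetaL12 kap12
  fun_prop

theorem fderiv_ThetaL12_apply (hL : ContDiff ℝ ∞ L) (x w u : E12 n k r) :
    fderiv ℝ (fun y => ThetaL12 n k r L y w) x u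
      = fderiv ℝ L x u * w.1 + ∑ i, (fderiv ℝ (dLv12 n k r L i) x u * kap12 n k r i x w
        - dLv12 n k r L i x * (u.2.2.1 i * w.1)) := by
  have hTerm : ∀ i, HasFDerivAt (fun y => dLv12 n k r L i y * kap12 n k r i y w)
      (dLv12 n k r L i x • -(w.1 • vCoord n k r i)
        + kap12 n k r i x w • fderiv ℝ (dLv12 n k r L i) x) x := fun i =>
    (((contDiff_dLv12 hL i).differentiable (by simp) x).hasFDerivAt).mul
      (hasFDerivAt_kap12 i w x)
  have hΘ := ((hL.differentiable (by simp) x).hasFDerivAt.mul_const w.1).fun_add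
    (HasFDerivAt.fun_sum (u := Finset.univ) fun i _ => hTerm i)
  rw [HasFDerivAt.fderiv (f := fun y => ThetaL12 n k r L y w) hΘ]
  simp only [add_apply, _root_.sum_apply, smul_apply, neg_apply, vCoord_apply, smul_eq_mul]
  congr 1
  · ring
  · exact Finset.sum_congr rfl fun i _ => by ring

theorem extd1_ThetaL12_vertical (hL : ContDiff ℝ ∞ L) {x v w : E12 n k r} (hv : v.1 = 1)
    (hκ : ∀ i, kap12 n k r i x v = 0) (hw : w.1 = 0) :
    extd1 (ThetaL12 n k r L) x w v
      = fderiv ℝ L x w - ∑ i, dLv12 n k r L i x * w.2.2.1 i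
        - ∑ i, fderiv ℝ (dLv12 n k r L i) x v * w.2.1 i := by
  have hκw : ∀ i, kap12 n k r i x w = w.2.1 i := fun i => by simp [kap12, hw]
  rw [extd1, fderiv_ThetaL12_apply hL, fderiv_ThetaL12_apply hL]
  simp [hv, hw, hκ, hκw]
  ring

end Lagrangian

section Unified

variable {n k r : ℕ} {L : E12 n k r → ℝ}

def pCoord (n k r : ℕ) (i : Fin n) : E16 n k r →L[ℝ] ℝ :=
  (ContinuousLinearMap.proj i).comp ((ContinuousLinearMap.fst ℝ _ _).comp
    (ContinuousLinearMap.snd ℝ _ _))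

@[simp]
theorem pCoord_apply (i : Fin n) (w : E16 n k r) : pCoord n k r i w = w.2.1 i := rfl

theorem fderiv_sum_mul_kap12_apply (x w u : E16 n k r) :
    fderiv ℝ (fun y : E16 n k r => ∑ i, y.2.1 i * kap12 n k r i y.1 w.1) x u
      = ∑ i, (u.2.1 i * kap12 n k r i x.1 w.1 - x.2.1 i * (u.1.2.2.1 i * w.1.1)) := by
  have hTerm : ∀ i, HasFDerivAt (fun y : E16 n k r => y.2.1 i * kap12 n k r i y.1 w.1)
      (x.2.1 i • (-(w.1.1 • vCoord n k r i)).comp (ContinuousLinearMap.fst ℝ _ _)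
        + kap12 n k r i x.1 w.1 • pCoord n k r i) x := fun i =>
    ((pCoord n k r i).hasFDerivAt (x := x)).mul
      ((hasFDerivAt_kap12 i w.1 x.1).comp x hasFDerivAt_fst)
  rw [(HasFDerivAt.fun_sum (u := Finset.univ) fun i _ => hTerm i).fderiv]
  simp only [_root_.sum_apply, add_apply, smul_apply, ContinuousLinearMap.comp_apply,
    neg_apply, vCoord_apply, pCoord_apply, smul_eq_mul, ContinuousLinearMap.coe_fst']
  exact Finset.sum_congr rfl fun i _ => by ring

theorem fderiv_comp_fst_apply (hL : ContDiff ℝ ∞ L) (x u : E16 n k r) :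
    fderiv ℝ (fun z : E16 n k r => L z.1) x u = fderiv ℝ L x.1 u.1 := by
  rw [HasFDerivAt.fderiv (f := fun z : E16 n k r => L z.1)
    ((hL.differentiable (by simp) x.1).hasFDerivAt.comp x hasFDerivAt_fst)]
  rfl

theorem OmegaU16_vertical (hL : ContDiff ℝ ∞ L) (η : Fin k → E12 n k r → E12 n k r → ℝ)
    {x v w : E16 n k r} (hv : v.1.1 = 1) (hw : w.1.1 = 0) :
    OmegaU16 n k r L η x w v
      = fderiv ℝ L x.1 w.1 + ∑ i, w.2.1 i * kap12 n k r i x.1 v.1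
        - ∑ i, x.2.1 i * w.1.2.2.1 i - ∑ i, v.2.1 i * w.1.2.1 i
        + ∑ a, w.2.2 a * η a x.1 v.1 - ∑ a, v.2.2 a * η a x.1 w.1 := by
  have hκw : ∀ i, kap12 n k r i x.1 w.1 = w.1.2.1 i := fun i => by simp [kap12, hw]
  simp only [OmegaU16, wedge11, extd1, fderiv_comp_fst_apply hL, fderiv_sum_mul_kap12_apply,
    hv, hw, hκw, mul_zero, mul_one, sub_zero, Finset.sum_sub_distrib]
  ring

theorem OmegaU16_vertical_of_momenta (hL : ContDiff ℝ ∞ L)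
    (η : Fin k → E12 n k r → E12 n k r → ℝ) {x v w : E16 n k r} (hv : v.1.1 = 1)
    (hw : w.1.1 = 0) (hκ : ∀ i, kap12 n k r i x.1 v.1 = 0)
    (hp : ∀ i, x.2.1 i = dLv12 n k r L i x.1)
    (hp' : ∀ i, v.2.1 i = fderiv ℝ (dLv12 n k r L i) x.1 v.1) :
    OmegaU16 n k r L η x w v
      = extd1 (ThetaL12 n k r L) x.1 w.1 v.1
        + ∑ a, w.2.2 a * η a x.1 v.1 - ∑ a, v.2.2 a * η a x.1 w.1 := by
  rw [OmegaU16_vertical hL η hv hw, extd1_ThetaL12_vertical hL hv hκ hw]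
  simp only [hκ, hp, hp', mul_zero, Finset.sum_const_zero, add_zero]

theorem constraints_of_OmegaU16 (hL : ContDiff ℝ ∞ L) {η : Fin k → E12 n k r → E12 n k r → ℝ}
    (hη : ∀ a x, IsLinearMap ℝ (η a x)) (hηv : ∀ i a x, η a x (vBasis n k r i) = 0)
    {x v : E16 n k r} (hv : v.1.1 = 1) (h : ∀ w, w.1.1 = 0 → OmegaU16 n k r L η x w v = 0) :
    (∀ i, kap12 n k r i x.1 v.1 = 0) ∧ (∀ a, η a x.1 v.1 = 0) ∧
      ∀ i, x.2.1 i = dLv12 n k r L i x.1 := by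
  have hη0 : ∀ a x, η a x 0 = 0 := fun a x => (hη a x).mk'.map_zero
  refine ⟨fun i => ?_, fun a => ?_, fun i => ?_⟩
  · have := h (0, Pi.single i 1, 0) rfl
    rw [OmegaU16_vertical hL η hv rfl] at this
    simpa [hη0, Pi.single_apply] using this
  · have := h (0, 0, Pi.single a 1) rfl
    rw [OmegaU16_vertical hL η hv rfl] at this
    simpa [hη0, Pi.single_apply] using this
  · have := h (vBasis n k r i, 0, 0) rfl
    rw [OmegaU16_vertical hL η hv rfl] at this
    have hdL : fderiv ℝ L x.1 (vBasis n k r i) = dLv12 n k r L i x.1 := rfl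
    simp only [hηv, hdL, mul_zero, Finset.sum_const_zero, sub_zero] at this
    simp [vBasis, Pi.single_apply] at this
    linarith

end Unified

theorem exists_contDiffOn_hasDerivAt {F : Type*} [NormedAddCommGroup F] [NormedSpace ℝ F]
    [CompleteSpace F] {I : Set ℝ} (hI : IsOpen I) (hI' : I.OrdConnected) {f : ℝ → F}
    (hf : ContDiffOn ℝ ∞ f I) :
    ∃ P : ℝ → F, ContDiffOn ℝ ∞ P I ∧ ∀ t ∈ I, HasDerivAt P (f t) t := by
  rcases I.eq_empty_or_nonempty with rfl | ⟨t₀, ht₀⟩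
  · exact ⟨0, contDiffOn_empty, by simp⟩
  have hP : ∀ t ∈ I, HasDerivAt (fun s => ∫ u in t₀..s, f u) (f t) t := fun t ht =>
    intervalIntegral.integral_hasDerivAt_right
      (hf.continuousOn.mono (hI'.uIcc_subset ht₀ ht)).intervalIntegrable
      (hf.continuousOn.stronglyMeasurableAtFilter hI t ht)
      (hf.continuousOn.continuousAt (hI.mem_nhds ht))
  refine ⟨_, (contDiffOn_infty_iff_deriv_of_isOpen hI).2 ⟨?_, ?_⟩, hP⟩
  · exact fun t ht => (hP t ht).differentiableAt.differentiableWithinAt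
  · exact hf.congr fun t ht => (hP t ht).deriv

namespace IsSection

variable {E : Type*} [NormedAddCommGroup E] [NormedSpace ℝ E] {T : E → ℝ} {γ : ℝ → E}
  {I : Set ℝ}

theorem hasDerivAt (h : IsSection T γ I) {t : ℝ} (ht : t ∈ I) :
    HasDerivAt γ (deriv γ t) t :=
  ((h.smooth.contDiffAt (h.isOpen.mem_nhds ht)).differentiableAt (by simp)).hasDerivAt

theorem apply_deriv_eq_one {T : E →L[ℝ] ℝ} (h : IsSection T γ I) {t : ℝ} (ht : t ∈ I) :
    T (deriv γ t) = 1 := by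
  have hT : HasDerivAt (T ∘ γ) (T (deriv γ t)) t :=
    T.hasFDerivAt.comp_hasDerivAt t (h.hasDerivAt ht)
  refine hT.unique ((hasDerivAt_id t).congr_of_eventuallyEq ?_)
  filter_upwards [h.isOpen.mem_nhds ht] with s hs using h.proj s hs

theorem map {F : Type*} [NormedAddCommGroup F] [NormedSpace ℝ F] {T : F → ℝ} {f : E → F}
    (hf : ContDiff ℝ ∞ f) (h : IsSection (T ∘ f) γ I) : IsSection T (f ∘ γ) I :=
  ⟨h.isOpen, h.ordConnected, h.nonempty, hf.comp_contDiffOn h.smooth, h.proj⟩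

end IsSection

section Extension

variable {n k r : ℕ} {L : E12 n k r → ℝ} {η : Fin k → E12 n k r → E12 n k r → ℝ}
  {R : Fin k → E12 n k r → E12 n k r} {OmgBar : E12 n k r → E12 n k r → E12 n k r → ℝ}

theorem IsSection.deriv_momentum_eq (hL : ContDiff ℝ ∞ L) {T : E16 n k r → ℝ}
    {γ' : ℝ → E16 n k r} {I : Set ℝ} (h : IsSection T γ' I)
    (hp : ∀ t ∈ I, ∀ i, (γ' t).2.1 i = dLv12 n k r L i (γ' t).1) {t : ℝ} (ht : t ∈ I) (i : Fin n) :
    (deriv γ' t).2.1 i = fderiv ℝ (dLv12 n k r L i) (γ' t).1 (deriv γ' t).1 := by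
  have hdγ' := h.hasDerivAt ht
  have hdp := ((contDiff_dLv12 hL i).differentiable (by simp) _).hasFDerivAt.comp_hasDerivAt t
    ((ContinuousLinearMap.fst ℝ _ _).hasFDerivAt.comp_hasDerivAt t hdγ')
  refine ((pCoord n k r i).hasFDerivAt.comp_hasDerivAt t hdγ').unique
    (hdp.congr_of_eventuallyEq ?_)
  filter_upwards [h.isOpen.mem_nhds ht] with s hs using hp s hs i

theorem IsSolU16.isSolE16_fst (hL : ContDiff ℝ ∞ L) (hη : ∀ a x, IsLinearMap ℝ (η a x))
    (hηv : ∀ i a x, η a x (vBasis n k r i) = 0) (hRτ : ∀ a x, (R a x).1 = 0)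
    (hRη : ∀ a b x, η b x (R a x) = if a = b then 1 else 0)
    (hOmgBar : ∀ x u v, OmgBar x u v = extd1 (ThetaL12 n k r L) x u v +
      ∑ a, wedge11 (iota2 (R a) (extd1 (ThetaL12 n k r L))) (η a) x u v)
    {γ' : ℝ → E16 n k r} {I : Set ℝ} (h : IsSolU16 n k r L η γ' I) :
    IsSolE16 n k r OmgBar η (fun t => (γ' t).1) I := by
  obtain ⟨hsec, hsol⟩ := h
  have hderiv : ∀ t ∈ I, deriv (fun s => (γ' s).1) t = (deriv γ' t).1 := fun t ht => by
    have := hasFDerivAt_fst.comp_hasDerivAt t (hsec.hasDerivAt ht)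
    exact this.deriv
  have hv : ∀ t ∈ I, (deriv γ' t).1.1 = 1 := fun t ht =>
    hsec.apply_deriv_eq_one (E := E16 n k r)
      (T := (ContinuousLinearMap.fst ℝ ℝ _).comp (ContinuousLinearMap.fst ℝ (E12 n k r) _)) ht
  have hU : ∀ t ∈ I, ∀ w, w.1.1 = 0 → OmegaU16 n k r L η (γ' t) w (deriv γ' t) = 0 :=
    fun t ht w hw => hsol (fun _ => w) contDiff_const (fun _ => hw) t ht
  choose hκ hηγ hp using fun t (ht : t ∈ I) =>
    constraints_of_OmegaU16 hL hη hηv (hv t ht) (hU t ht)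
  refine ⟨hsec.map contDiff_fst, fun a t ht => ?_, fun i t ht => ?_, fun ξ hξ t ht => ?_⟩
  · rw [hderiv t ht]; exact hηγ t ht a
  · rw [hderiv t ht]; exact hκ t ht i
  rw [hOmgBar, hderiv t ht]
  refine add_sum_wedge11_iota2_eq_zero _ η R (hηγ t ht) (hRη · · _) (V := {w | w.1 = 0})
    (fun a => hRτ a _) (c := (deriv γ' t).2.2) (fun w hw => ?_) (hξ.2 _)
  have := hU t ht (w, 0, 0) hw
  rw [OmegaU16_vertical_of_momenta hL η (w := (w, 0, 0)) (hv t ht) hw (hκ t ht) (hp t ht)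
    (hsec.deriv_momentum_eq hL hp ht)] at this
  simpa [hηγ t ht, sub_eq_zero] using this

theorem IsSolE16.exists_isSolU16 (hL : ContDiff ℝ ∞ L) (hR : ∀ a, ContDiff ℝ ∞ (R a))
    (hOmgBar : ∀ x u v, OmgBar x u v = extd1 (ThetaL12 n k r L) x u v +
      ∑ a, wedge11 (iota2 (R a) (extd1 (ThetaL12 n k r L))) (η a) x u v)
    {γ : ℝ → E12 n k r} {I : Set ℝ} (h : IsSolE16 n k r OmgBar η γ I) :
    ∃ γ' : ℝ → E16 n k r, IsSolU16 n k r L η γ' I ∧ ∀ t ∈ I, (γ' t).1 = γ t := by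
  obtain ⟨hsec, hηγ, hκγ, hsol⟩ := h
  set c : Fin k → ℝ → ℝ := fun a t => extd1 (ThetaL12 n k r L) (γ t) (R a (γ t)) (deriv γ t)
  have hc : ∀ a, ContDiffOn ℝ ∞ (c a) I := fun a =>
    (contDiff_extd1 (contDiff_ThetaL12 hL)).comp_contDiffOn (hsec.smooth.prodMk
      (((hR a).comp_contDiffOn hsec.smooth).prodMk
        (hsec.smooth.deriv_of_isOpen hsec.isOpen (by simp))))
  choose P hP hP' using fun a => exists_contDiffOn_hasDerivAt hsec.isOpen hsec.ordConnected (hc a)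
  let γ' : ℝ → E16 n k r := fun t => (γ t, fun i => dLv12 n k r L i (γ t), fun a => P a t)
  have hγ' : ∀ t ∈ I, HasDerivAt γ'
      (deriv γ t, fun i => fderiv ℝ (dLv12 n k r L i) (γ t) (deriv γ t), fun a => c a t) t :=
    fun t ht => (hsec.hasDerivAt ht).prodMk ((hasDerivAt_pi.2 fun i =>
      ((contDiff_dLv12 hL i).differentiable (by simp) _).hasFDerivAt.comp_hasDerivAt t
        (hsec.hasDerivAt ht)).prodMk (hasDerivAt_pi.2 fun a => hP' a t ht))
  have hv : ∀ t ∈ I, (deriv γ t).1 = 1 := fun t ht =>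
    hsec.apply_deriv_eq_one (E := E12 n k r) (T := ContinuousLinearMap.fst ℝ ℝ _) ht
  refine ⟨γ', ⟨⟨hsec.isOpen, hsec.ordConnected, hsec.nonempty, ?_, hsec.proj⟩,
    fun ξ _ hξ t ht => ?_⟩, fun _ _ => rfl⟩
  · exact hsec.smooth.prodMk ((contDiffOn_pi.2 fun i =>
      (contDiff_dLv12 hL i).comp_contDiffOn hsec.smooth).prodMk (contDiffOn_pi.2 hP))
  have hEL : extd1 (ThetaL12 n k r L) (γ t) (ξ (γ' t)).1 (deriv γ t)
      = ∑ a, c a t * η a (γ t) (ξ (γ' t)).1 := by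
    have := hsol (fun _ => (ξ (γ' t)).1) ⟨contDiff_const, fun _ => hξ _⟩ t ht
    rw [hOmgBar, add_sum_wedge11_iota2_apply _ η R (hηγ · t ht)] at this
    exact sub_eq_zero.1 this
  rw [(hγ' t ht).deriv, OmegaU16_vertical_of_momenta hL η (hv t ht) (hξ _) (hκγ · t ht)
    (fun _ => rfl) (fun _ => rfl)]
  change extd1 _ (γ t) _ _ + ∑ a, _ * η a (γ t) _ - ∑ a, _ * η a (γ t) _ = 0
  simp [hηγ _ t ht, hEL]

end Extension

/-- For compatible constraints, the GVP `(Ω_U, ∅, Γ(V(π∘π')))` is an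
extension of the GVP `(Ω̄, (∅, I₁ⁿʰ, I₁ᵛᵃᵏ), Γ(V(π)))`: composition with `π'` maps its
solutions onto the solutions of the latter. -/
theorem absorption_mixed_constraints (n k r : ℕ) (L : E12 n k r → ℝ)
    (hL : ContDiff ℝ ∞ L)
    (η : Fin k → E12 n k r → E12 n k r → ℝ) (hη : ∀ a, IsForm1 (η a))
    (hcompat : CompatibleConstraints n k r η)
    (R : Fin k → E12 n k r → E12 n k r) (hR : ∀ a, ContDiff ℝ ∞ (R a))
    (hRτ : ∀ a x, (R a x).1 = 0)
    (hRη : ∀ a b x, η b x (R a x) = if a = b then 1 else 0)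
    (OmgBar : E12 n k r → E12 n k r → E12 n k r → ℝ)
    (hOmgBar : ∀ x u v, OmgBar x u v = extd1 (ThetaL12 n k r L) x u v +
      ∑ a, wedge11 (iota2 (R a) (extd1 (ThetaL12 n k r L))) (η a) x u v) :
    (∀ (γ' : ℝ → E16 n k r) (I : Set ℝ), IsSolU16 n k r L η γ' I →
        IsSolE16 n k r OmgBar η (fun t => (γ' t).1) I) ∧
    (∀ (γ : ℝ → E12 n k r) (I : Set ℝ), IsSolE16 n k r OmgBar η γ I →
        ∃ γ' : ℝ → E16 n k r, IsSolU16 n k r L η γ' I ∧ ∀ t ∈ I, (γ' t).1 = γ t) :=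
  ⟨fun _ _ h => h.isSolE16_fst hL (fun a => (hη a).2) hcompat.2 hRτ hRη hOmgBar,
    fun _ _ h => h.exists_isSolU16 hL hR hOmgBar⟩

end VPGeom
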